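/- Let K/F be cyclic Galois of prime degree p with Galois group ⟨σ⟩, and f(t) = t^m − Σ a_i t^i ∈ K[t;σ] not right invariant, with nonzero coefficient index set Λ. Then Nuc(S_f) = K if and only if p divides m − λ for every λ ∈ Λ; equivalently, Nuc(S_f) = F if and only if there exists λ ∈ Λ with p not dividing m − λ. -/

import Mathlib

open Polynomial

/-- Skew (twisted) multiplication on polynomials over `K`, representing the
multiplication of the twisted polynomial ring `K[t;σ]` with `t·a = σ(a)·t`:
`(a t^i)·(b t^j) = a σ^i(b) t^{i+j}`. -/
noncomputable def sMul {K : Type} [Field K] (σ : K ≃+* K) (p q : K[X]) : K[X] :=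
  p.sum fun i a => C a * (q.map ((σ ^ i : K ≃+* K) : K →+* K)) * X ^ i

/-- `f` is right invariant in `K[t;σ]`: `f·g ∈ R·f` for all `g`. -/
def RightInvariant {K : Type} [Field K] (σ : K ≃+* K) (f : K[X]) : Prop :=
  ∀ g : K[X], ∃ q : K[X], sMul σ f g = sMul σ q f

/-- Membership in the eigenring of `f`, i.e. the right nucleus of the Petit
algebra `S_f = K[t;σ]/K[t;σ]f` (for `f` not right invariant):
`{g | deg g < deg f ∧ f·g ∈ R·f}`. -/
def InEigenring {K : Type} [Field K] (σ : K ≃+* K) (f g : K[X]) : Prop :=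
  g.degree < f.degree ∧ ∃ q : K[X], sMul σ f g = sMul σ q f

/-- Remainder of right division by `f` in `K[t;σ]` (Petit multiplication in
`S_f` is `g ∘ h = (g·h) mod_r f`). -/
noncomputable def modRight {K : Type} [Field K] (σ : K ≃+* K) (f g : K[X]) : K[X] := by
  classical
  exact if h : ∃ r : K[X], r.degree < f.degree ∧ ∃ q : K[X], g = sMul σ q f + r
    then h.choose else 0

/-!
A constant `d` lies in the eigenring of the monic `f` iff `f · d = q · f` for some `q`; comparing
top coefficients forces `q` to be a constant `c`, and comparing the coefficients of `t^i` then gives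
`σ^i(d) = c = σ^m(d)`, i.e. `σ^(m-i)(d) = d`, for every `i` with `a_i ≠ 0`. In a cyclic extension of
prime degree `p`, `σ^j` is the identity when `p ∣ j`, and otherwise it generates the Galois group,
so its fixed field is `F`.
-/

section SkewPolynomial

variable {K : Type} [Field K] (σ : K ≃+* K)

lemma sMul_zero_left (f : K[X]) : sMul σ 0 f = 0 :=
  Polynomial.sum_zero_index _

lemma sMul_C_left (c : K) (f : K[X]) : sMul σ (C c) f = C c * f := by
  have h1 : ((1 : K ≃+* K) : K →+* K) = RingHom.id K := rfl
  simp [sMul, Polynomial.sum_C_index, h1]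

lemma coeff_sMul_C (f : K[X]) (d : K) (k : ℕ) :
    (sMul σ f (C d)).coeff k = f.coeff k * (σ ^ k) d := by
  simp only [sMul, Polynomial.sum, finsetSum_coeff, map_C, ← C_mul, coeff_C_mul_X_pow,
    Finset.sum_ite_eq, RingEquiv.coe_toRingHom]
  split_ifs with h
  · rfl
  · rw [notMem_support_iff.mp h, zero_mul]

lemma coeff_sMul_natDegree_add (q f : K[X]) :
    (sMul σ q f).coeff (q.natDegree + f.natDegree) =
      q.leadingCoeff * (σ ^ q.natDegree) f.leadingCoeff := by
  rcases eq_or_ne q 0 with rfl | hq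
  · simp [sMul_zero_left]
  rw [sMul, Polynomial.sum, finsetSum_coeff,
    Finset.sum_eq_single_of_mem _ (natDegree_mem_support_of_nonzero hq)]
  · rw [coeff_mul_X_pow', if_pos (Nat.le_add_right _ _), Nat.add_sub_cancel_left, coeff_C_mul,
      coeff_map]
    rfl
  · intro j hj hne
    have hj : j < q.natDegree := (le_natDegree_of_mem_supp j hj).lt_of_ne hne
    rw [coeff_mul_X_pow', if_pos (by omega), coeff_C_mul, coeff_map,
      coeff_eq_zero_of_natDegree_lt (p := f) (by omega), map_zero, mul_zero]

lemma natDegree_eq_zero_of_sMul_C_eq {f q : K[X]} {d : K} (hf : f ≠ 0)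
    (h : sMul σ f (C d) = sMul σ q f) : q.natDegree = 0 := by
  by_contra hq
  have htop := congrArg (coeff · (q.natDegree + f.natDegree)) h
  simp only [coeff_sMul_C, coeff_sMul_natDegree_add,
    coeff_eq_zero_of_natDegree_lt (show f.natDegree < q.natDegree + f.natDegree by omega),
    zero_mul] at htop
  have hq0 : q ≠ 0 := by rintro rfl; simp at hq
  exact mul_ne_zero (leadingCoeff_ne_zero.mpr hq0)
    ((σ ^ q.natDegree).map_ne_zero_iff.mpr (leadingCoeff_ne_zero.mpr hf)) htop.symm

lemma inEigenring_C_iff {f : K[X]} (hmonic : f.Monic) (hdeg : 0 < f.natDegree) (d : K) :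
    InEigenring σ f (C d) ↔
      ∀ i < f.natDegree, f.coeff i ≠ 0 → (σ ^ i) d = (σ ^ f.natDegree) d := by
  constructor
  · rintro ⟨-, q, hq⟩ i - hi
    obtain ⟨c, rfl⟩ : ∃ c, q = C c :=
      ⟨_, eq_C_of_natDegree_eq_zero (natDegree_eq_zero_of_sMul_C_eq σ hmonic.ne_zero hq)⟩
    rw [sMul_C_left] at hq
    have hcoeff (k : ℕ) : f.coeff k * (σ ^ k) d = c * f.coeff k := by
      rw [← coeff_sMul_C, hq, coeff_C_mul]
    have htop := hcoeff f.natDegree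
    rw [← leadingCoeff, hmonic.leadingCoeff, one_mul, mul_one] at htop
    rw [htop, ← mul_left_cancel₀ hi ((hcoeff i).trans (mul_comm _ _))]
  · intro h
    refine ⟨(degree_C_le).trans_lt ?_, C ((σ ^ f.natDegree) d), ?_⟩
    · rw [degree_eq_natDegree hmonic.ne_zero]
      exact_mod_cast hdeg
    ext k
    rw [coeff_sMul_C, sMul_C_left, coeff_C_mul]
    rcases eq_or_ne (f.coeff k) 0 with hk | hk
    · simp [hk]
    rcases (le_natDegree_of_ne_zero hk).lt_or_eq with hlt | rfl
    · rw [h k hlt hk, mul_comm]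
    · rw [mul_comm]

end SkewPolynomial

section XPowSubSum

variable {K : Type} [Field K] (m : ℕ) (a : ℕ → K)

lemma degree_sum_C_mul_X_pow_lt :
    (∑ i ∈ Finset.range m, C (a i) * X ^ i).degree < (m : WithBot ℕ) := by
  rw [← mem_degreeLT]
  refine Submodule.sum_mem _ fun i hi ↦ mem_degreeLT.mpr ?_
  exact (degree_C_mul_X_pow_le i (a i)).trans_lt (by exact_mod_cast Finset.mem_range.mp hi)

lemma monic_X_pow_sub_sum :
    (X ^ m - ∑ i ∈ Finset.range m, C (a i) * X ^ i).Monic :=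
  monic_X_pow_sub (degree_sum_C_mul_X_pow_lt m a)

lemma natDegree_X_pow_sub_sum :
    (X ^ m - ∑ i ∈ Finset.range m, C (a i) * X ^ i).natDegree = m := by
  apply natDegree_eq_of_degree_eq_some
  rw [degree_sub_eq_left_of_degree_lt] <;> rw [degree_X_pow]
  exact degree_sum_C_mul_X_pow_lt m a

lemma coeff_X_pow_sub_sum {i : ℕ} (hi : i < m) :
    (X ^ m - ∑ i ∈ Finset.range m, C (a i) * X ^ i).coeff i = -a i := by
  simp [coeff_X_pow, hi, hi.ne]

end XPowSubSum

section GroupAction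

variable {G X : Type*} [Group G] [MulAction G X]

lemma pow_smul_eq_pow_smul_iff (g : G) (x : X) {i n : ℕ} (h : i ≤ n) :
    g ^ i • x = g ^ n • x ↔ g ^ (n - i) • x = x := by
  rw [← Nat.add_sub_cancel' h, pow_add, mul_smul, smul_left_cancel_iff, Nat.add_sub_cancel_left,
    eq_comm]

lemma pow_smul_eq_self_iff_of_coprime {g : G} {j : ℕ} (hj : j.Coprime (orderOf g)) (x : X) :
    g ^ j • x = x ↔ g • x = x := by
  obtain ⟨k, hk⟩ := exists_pow_eq_self_of_coprime hj
  simp only [← MulAction.mem_stabilizer_iff]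
  exact ⟨fun h ↦ hk ▸ pow_mem h k, fun h ↦ pow_mem h j⟩

end GroupAction

section CyclicGalois

variable {F K : Type} [Field F] [Field K] [Algebra F K]

lemma AlgEquiv.toRingEquiv_pow_apply (σ : K ≃ₐ[F] K) (n : ℕ) (x : K) :
    (σ.toRingEquiv ^ n) x = (σ ^ n) x := by
  induction n generalizing x with
  | zero => rfl
  | succ n ih => exact ih (σ x)

variable [IsGalois F K] [FiniteDimensional F K] {σ : K ≃ₐ[F] K}

lemma orderOf_eq_finrank_of_forall_mem_zpowers (hσ : ∀ τ : K ≃ₐ[F] K, τ ∈ Subgroup.zpowers σ) :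
    orderOf σ = Module.finrank F K := by
  rw [← Nat.card_zpowers, (Subgroup.eq_top_iff' _).mpr hσ, Subgroup.card_top,
    IsGalois.card_aut_eq_finrank]

lemma mem_bot_iff_apply_eq_self_of_forall_mem_zpowers
    (hσ : ∀ τ : K ≃ₐ[F] K, τ ∈ Subgroup.zpowers σ) (d : K) :
    d ∈ (⊥ : IntermediateField F K) ↔ σ d = d := by
  rw [IsGalois.mem_bot_iff_fixed]
  refine ⟨fun h ↦ h σ, fun h τ ↦ ?_⟩
  have hle : Subgroup.zpowers σ ≤ MulAction.stabilizer (K ≃ₐ[F] K) d :=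
    Subgroup.zpowers_le.mpr h
  exact hle (hσ τ)

lemma pow_apply_eq_self_iff_mem_bot (hσ : ∀ τ : K ≃ₐ[F] K, τ ∈ Subgroup.zpowers σ) {j : ℕ}
    (hj : j.Coprime (orderOf σ)) (d : K) :
    (σ ^ j) d = d ↔ d ∈ (⊥ : IntermediateField F K) := by
  rw [mem_bot_iff_apply_eq_self_of_forall_mem_zpowers hσ]
  exact pow_smul_eq_self_iff_of_coprime hj d

end CyclicGalois

theorem nucleus_prime_degree_general (F K : Type) [Field F] [Field K] [Algebra F K]
    [IsGalois F K] [FiniteDimensional F K]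
    (p : ℕ) (hp : p.Prime) (hn : Module.finrank F K = p)
    (σ : K ≃ₐ[F] K) (hgen : ∀ τ : K ≃ₐ[F] K, τ ∈ Subgroup.zpowers σ)
    (σr : K ≃+* K) (hσr : ∀ x, σr x = σ x)
    (m : ℕ) (hm : 2 ≤ m) (a : ℕ → K) (f : K[X])
    (hf : f = X ^ m - ∑ i ∈ Finset.range m, C (a i) * X ^ i) :
    ({d : K | InEigenring σr f (C d)} = Set.univ ↔
        ∀ i < m, a i ≠ 0 → p ∣ (m - i)) ∧
      ({d : K | InEigenring σr f (C d)} = ((⊥ : IntermediateField F K) : Set K) ↔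
        ∃ i < m, a i ≠ 0 ∧ ¬ p ∣ (m - i)) := by
  obtain rfl : σr = σ.toRingEquiv := RingEquiv.ext hσr
  have horder : orderOf σ = p := (orderOf_eq_finrank_of_forall_mem_zpowers hgen).trans hn
  have hnucleus : {d : K | InEigenring σ.toRingEquiv f (C d)} =
      {d | ∀ i < m, a i ≠ 0 → (σ ^ (m - i)) d = d} := by
    ext d
    rw [Set.mem_ofPred_eq, hf, inEigenring_C_iff _ (monic_X_pow_sub_sum m a)
      (by rw [natDegree_X_pow_sub_sum]; omega), natDegree_X_pow_sub_sum]
    refine forall₂_congr fun i hi ↦ ?_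
    rw [coeff_X_pow_sub_sum m a hi, neg_ne_zero, σ.toRingEquiv_pow_apply,
      σ.toRingEquiv_pow_apply]
    exact imp_congr_right fun _ ↦ pow_smul_eq_pow_smul_iff σ d hi.le
  have hfix_all (j : ℕ) : (∀ d : K, (σ ^ j) d = d) ↔ p ∣ j := by
    rw [← horder, orderOf_dvd_iff_pow_eq_one, AlgEquiv.ext_iff]
    simp only [AlgEquiv.one_apply]
  have huniv : {d : K | ∀ i < m, a i ≠ 0 → (σ ^ (m - i)) d = d} = Set.univ ↔
      ∀ i < m, a i ≠ 0 → p ∣ (m - i) := by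
    simp only [Set.eq_univ_iff_forall, Set.mem_ofPred_eq, ← hfix_all]
    exact ⟨fun h i hi hai d ↦ h d i hi hai, fun h d i hi hai ↦ h i hi hai d⟩
  rw [hnucleus]
  refine ⟨huniv, fun h ↦ ?_, fun ⟨i, hi, hai, hpi⟩ ↦ ?_⟩
  · by_contra! hall
    have hbot : (⊥ : IntermediateField F K) = ⊤ :=
      SetLike.coe_injective (h.symm.trans (huniv.mpr hall))
    exact hp.one_lt.ne' (hn ▸ IntermediateField.bot_eq_top_iff_finrank_eq_one.mp hbot)
  · have hcop : (m - i).Coprime (orderOf σ) :=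
      (horder ▸ (Nat.Prime.coprime_iff_not_dvd hp).mpr hpi).symm
    ext d
    refine ⟨fun hd ↦ (pow_apply_eq_self_iff_mem_bot hgen hcop d).mp (hd i hi hai),
      fun hd j _ _ ↦ (IsGalois.mem_bot_iff_fixed d).mp hd _⟩

/-- Corollary 2.6: let `K/F` be cyclic Galois of prime degree `p` with Galois group
`⟨σ⟩` and `f(t) = t^m - Σ a_i t^i ∈ K[t;σ]` not right invariant. Then
`Nuc(S_f) = K` iff `p ∣ m - λ` for every nonzero coefficient index `λ`;
equivalently, `Nuc(S_f) = F` iff some nonzero coefficient index `λ` has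
`p ∤ m - λ`. -/
theorem nucleus_prime_degree (F K : Type) [Field F] [Field K] [Algebra F K]
    [IsGalois F K] [FiniteDimensional F K]
    (p : ℕ) (hp : p.Prime) (hn : Module.finrank F K = p)
    (σ : K ≃ₐ[F] K) (hgen : ∀ τ : K ≃ₐ[F] K, τ ∈ Subgroup.zpowers σ)
    (σr : K ≃+* K) (hσr : ∀ x, σr x = σ x)
    (m : ℕ) (hm : 2 ≤ m) (a : ℕ → K) (f : K[X])
    (hf : f = X ^ m - ∑ i ∈ Finset.range m, C (a i) * X ^ i)
    (hri : ¬ RightInvariant σr f) :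
    ({d : K | InEigenring σr f (C d)} = Set.univ ↔
        ∀ i < m, a i ≠ 0 → p ∣ (m - i)) ∧
      ({d : K | InEigenring σr f (C d)} = ((⊥ : IntermediateField F K) : Set K) ↔
        ∃ i < m, a i ≠ 0 ∧ ¬ p ∣ (m - i)) :=
  nucleus_prime_degree_general F K p hp hn σ hgen σr hσr m hm a f hf
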